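/- Let P be a distribution on 𝒳 × {−1,1} with regression function η satisfying the margin condition with exponent α > 0 and constant C_α (i.e., P_X(|2η(X)−1| ≤ s) ≤ C_α s^α for all 0 < s ≤ t₀). Then for any two measurable sets G₁, G₂ ⊆ 𝒳, (R_P(G₁) − R_P(G₂))^{(1+α)/α} ≤ C · (R_P(G₁) − R_P(G₂)) whenever R_P(G₂) = R_P*, and more precisely d_{P,Δ}(G₁, G*) ≤ C₁ (R_P(G₁) − R_P*)^{α/(1+α)} for a constant C₁ depending only on α and C_α, where G* is the Bayes decision set and d_{P,Δ}(G₁,G₂) = P_X(G₁ Δ G₂) is the measure of the symmetric difference. -/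

import Mathlib

open scoped Classical

open MeasureTheory

/-- Under the margin condition with exponent `α`, the measure of the symmetric difference of any
decision set with the Bayes decision set is bounded by a power of the excess risk:
`P_X(G₁ Δ G*) ≤ C₁ (R(G₁) - R*)^{α/(1+α)}`. -/
theorem symmDiff_le_excess_risk_pow {𝒳 : Type*} [MeasurableSpace 𝒳]
    (μ : Measure 𝒳) [IsProbabilityMeasure μ]
    (η : 𝒳 → ℝ) (hη : Measurable η) (hη01 : ∀ x, η x ∈ Set.Icc (0 : ℝ) 1)
    (α Cα t₀ : ℝ) (hα : 0 < α) (hCα : 0 < Cα) (ht₀ : 0 < t₀)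
    (hmargin : ∀ s : ℝ, 0 < s → s ≤ t₀ →
      μ {x | |2 * η x - 1| ≤ s} ≤ ENNReal.ofReal (Cα * s ^ α)) :
    ∃ C₁ > 0, ∀ G₁ : Set 𝒳, MeasurableSet G₁ →
      (μ (symmDiff G₁ {x | 1 / 2 ≤ η x})).toReal ≤
        C₁ * ((∫ x, (if x ∈ G₁ then 1 - η x else η x) ∂μ) -
          ∫ x, (if x ∈ {x | 1 / 2 ≤ η x} then 1 - η x else η x) ∂μ) ^ (α / (1 + α)) := by
  have h1α : (0:ℝ) < 1 + α := by linarith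
  have hGsm : MeasurableSet {x | 1 / 2 ≤ η x} := measurableSet_le measurable_const hη
  have hFm : Measurable (fun x => |2 * η x - 1|) :=
    ((measurable_const.mul hη).sub measurable_const).abs
  have hF0 : ∀ x, 0 ≤ |2 * η x - 1| := fun x => abs_nonneg _
  have hF1 : ∀ x, |2 * η x - 1| ≤ 1 := by
    intro x
    have h := hη01 x
    rw [Set.mem_Icc] at h
    rw [abs_le]; constructor <;> linarith [h.1, h.2]
  have hFint : Integrable (fun x => |2 * η x - 1|) μ := by
    refine (integrable_const (1:ℝ)).mono' hFm.aestronglyMeasurable (ae_of_all _ fun x => ?_)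
    rw [Real.norm_eq_abs, abs_abs]; exact hF1 x
  refine ⟨Cα + 1 + t₀ ^ (-α), by positivity, ?_⟩
  intro G₁ hG₁
  set sd := symmDiff G₁ {x | 1 / 2 ≤ η x} with hsddef
  have hsdm : MeasurableSet sd := hG₁.symmDiff hGsm
  have hfint : Integrable (fun x => if x ∈ G₁ then 1 - η x else η x) μ := by
    refine (integrable_const (1:ℝ)).mono'
      (Measurable.ite hG₁ (measurable_const.sub hη) hη).aestronglyMeasurable
      (ae_of_all _ fun x => ?_)
    have h := hη01 x; rw [Set.mem_Icc] at h
    by_cases hx : x ∈ G₁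
    · rw [if_pos hx, Real.norm_eq_abs, abs_le]; constructor <;> linarith [h.1, h.2]
    · rw [if_neg hx, Real.norm_eq_abs, abs_le]; constructor <;> linarith [h.1, h.2]
  have hgint : Integrable (fun x => if x ∈ {x | 1 / 2 ≤ η x} then 1 - η x else η x) μ := by
    refine (integrable_const (1:ℝ)).mono'
      (Measurable.ite hGsm (measurable_const.sub hη) hη).aestronglyMeasurable
      (ae_of_all _ fun x => ?_)
    have h := hη01 x; rw [Set.mem_Icc] at h
    by_cases hx : x ∈ {x | 1 / 2 ≤ η x}
    · rw [if_pos hx, Real.norm_eq_abs, abs_le]; constructor <;> linarith [h.1, h.2]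
    · rw [if_neg hx, Real.norm_eq_abs, abs_le]; constructor <;> linarith [h.1, h.2]
  have hpt : ∀ x, (if x ∈ G₁ then 1 - η x else η x) - (if x ∈ {x | 1 / 2 ≤ η x} then 1 - η x else η x)
      = sd.indicator (fun x => |2 * η x - 1|) x := by
    intro x
    have h := hη01 x; rw [Set.mem_Icc] at h
    by_cases h1 : x ∈ G₁ <;> by_cases h2 : x ∈ {x | 1 / 2 ≤ η x}
    · have hns : x ∉ sd := fun hs => by
        rcases Set.mem_symmDiff.mp hs with ⟨_, hb⟩ | ⟨_, hb⟩
        · exact hb h2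
        · exact hb h1
      rw [Set.indicator_of_notMem hns, if_pos h1, if_pos h2]; ring
    · have hs : x ∈ sd := Set.mem_symmDiff.mpr (Or.inl ⟨h1, h2⟩)
      have hη2 : ¬ (1:ℝ)/2 ≤ η x := h2
      rw [Set.indicator_of_mem hs, if_pos h1, if_neg h2, abs_of_nonpos (by push_neg at hη2; linarith)]
      ring
    · have hs : x ∈ sd := Set.mem_symmDiff.mpr (Or.inr ⟨h2, h1⟩)
      have hη2 : (1:ℝ)/2 ≤ η x := h2
      rw [Set.indicator_of_mem hs, if_neg h1, if_pos h2, abs_of_nonneg (by linarith)]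
      ring
    · have hns : x ∉ sd := fun hs => by
        rcases Set.mem_symmDiff.mp hs with ⟨ha, _⟩ | ⟨ha, _⟩
        · exact h1 ha
        · exact h2 ha
      rw [Set.indicator_of_notMem hns, if_neg h1, if_neg h2]; ring
  have key : (∫ x, (if x ∈ G₁ then 1 - η x else η x) ∂μ)
      - (∫ x, (if x ∈ {x | 1 / 2 ≤ η x} then 1 - η x else η x) ∂μ)
      = ∫ x in sd, |2 * η x - 1| ∂μ := by
    rw [← integral_sub hfint hgint, ← integral_indicator hsdm]
    exact integral_congr_ae (ae_of_all _ hpt)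
  rw [key]
  set E := ∫ x in sd, |2 * η x - 1| ∂μ with hEdef
  have hE0 : 0 ≤ E := setIntegral_nonneg hsdm (fun x _ => hF0 x)
  -- main inequality
  have hmain : ∀ s : ℝ, 0 < s → s ≤ t₀ → (μ sd).toReal ≤ Cα * s ^ α + E / s := by
    intro s hs hst
    have hBm : MeasurableSet (sd ∩ {x | s < |2 * η x - 1|}) :=
      hsdm.inter (measurableSet_lt measurable_const hFm)
    have hsub : sd ⊆ {x | |2 * η x - 1| ≤ s} ∪ (sd ∩ {x | s < |2 * η x - 1|}) := by
      intro x hx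
      by_cases h : |2 * η x - 1| ≤ s
      · exact Or.inl h
      · exact Or.inr ⟨hx, not_le.mp h⟩
    have h1 : (μ sd).toReal ≤ (μ {x | |2 * η x - 1| ≤ s}).toReal
        + (μ (sd ∩ {x | s < |2 * η x - 1|})).toReal := by
      rw [← ENNReal.toReal_add (measure_ne_top μ _) (measure_ne_top μ _)]
      exact ENNReal.toReal_mono
        (ENNReal.add_ne_top.mpr ⟨measure_ne_top μ _, measure_ne_top μ _⟩)
        ((measure_mono hsub).trans (measure_union_le _ _))
    have hA : (μ {x | |2 * η x - 1| ≤ s}).toReal ≤ Cα * s ^ α :=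
      ENNReal.toReal_le_of_le_ofReal (by positivity) (hmargin s hs hst)
    have hmark : s * (μ (sd ∩ {x | s < |2 * η x - 1|})).toReal ≤ E := by
      have h2 : s * (μ (sd ∩ {x | s < |2 * η x - 1|})).toReal
          ≤ ∫ x in sd ∩ {x | s < |2 * η x - 1|}, |2 * η x - 1| ∂μ :=
        setIntegral_ge_of_const_le_real hBm (measure_ne_top μ _)
          (fun x hx => le_of_lt hx.2) hFint.integrableOn
      have h3 : (∫ x in sd ∩ {x | s < |2 * η x - 1|}, |2 * η x - 1| ∂μ) ≤ E :=
        setIntegral_mono_set hFint.integrableOn (ae_of_all _ fun x => hF0 x)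
          (HasSubset.Subset.eventuallyLE Set.inter_subset_left)
      linarith
    have hB : (μ (sd ∩ {x | s < |2 * η x - 1|})).toReal ≤ E / s := by
      rw [le_div_iff₀ hs]; linarith [hmark, mul_comm s (μ (sd ∩ {x | s < |2 * η x - 1|})).toReal]
    linarith
  have hEp0 : 0 ≤ E ^ (α / (1 + α)) := Real.rpow_nonneg hE0 _
  have hT : 0 < t₀ ^ (-α) := Real.rpow_pos_of_pos ht₀ _
  rcases hE0.eq_or_lt with hE | hE
  · -- E = 0
    have hm0 : (μ sd).toReal ≤ 0 := by
      refine le_of_forall_pos_le_add fun ε hε => ?_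
      rw [zero_add]
      set s := min t₀ ((ε / Cα) ^ α⁻¹) with hsdef
      have hsp : 0 < s := lt_min ht₀ (Real.rpow_pos_of_pos (by positivity) _)
      have h := hmain s hsp (min_le_left _ _)
      have hsα : s ^ α ≤ ((ε / Cα) ^ α⁻¹) ^ α :=
        Real.rpow_le_rpow hsp.le (min_le_right _ _) hα.le
      have he : ((ε / Cα) ^ α⁻¹) ^ α = ε / Cα := by
        rw [← Real.rpow_mul (by positivity), inv_mul_cancel₀ hα.ne', Real.rpow_one]
      rw [he] at hsα
      have : Cα * s ^ α ≤ ε := by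
        calc Cα * s ^ α ≤ Cα * (ε / Cα) := by nlinarith
        _ = ε := by field_simp
      rw [← hE, zero_div] at h
      linarith
    rw [← hE, Real.zero_rpow (by positivity), mul_zero]
    exact hm0
  · by_cases hcase : E ^ ((1:ℝ) / (1 + α)) ≤ t₀
    · have hspos : 0 < E ^ ((1:ℝ) / (1 + α)) := Real.rpow_pos_of_pos hE _
      have h := hmain _ hspos hcase
      have e1 : (E ^ ((1:ℝ) / (1 + α))) ^ α = E ^ (α / (1 + α)) := by
        rw [← Real.rpow_mul hE.le]; ring_nf
      have e2 : E / E ^ ((1:ℝ) / (1 + α)) = E ^ (α / (1 + α)) := by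
        have : α / (1 + α) = 1 - 1 / (1 + α) := by field_simp; ring
        rw [this, Real.rpow_sub hE, Real.rpow_one]
      rw [e1, e2] at h
      nlinarith [mul_nonneg hT.le hEp0]
    · push_neg at hcase
      have hm1 : (μ sd).toReal ≤ 1 := by
        calc (μ sd).toReal ≤ (μ Set.univ).toReal :=
              ENNReal.toReal_mono (measure_ne_top μ _) (measure_mono (Set.subset_univ _))
          _ = 1 := by simp
      have e1 : (E ^ ((1:ℝ) / (1 + α))) ^ α = E ^ (α / (1 + α)) := by
        rw [← Real.rpow_mul hE.le]; ring_nf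
      have htα : t₀ ^ α < E ^ (α / (1 + α)) := by
        have h := Real.rpow_lt_rpow ht₀.le hcase hα
        rwa [e1] at h
      have hkey : 1 < t₀ ^ (-α) * E ^ (α / (1 + α)) := by
        rw [Real.rpow_neg ht₀.le, ← div_eq_inv_mul]
        exact (one_lt_div (Real.rpow_pos_of_pos ht₀ α)).2 htα
      nlinarith [mul_nonneg (by positivity : (0:ℝ) ≤ Cα + 1) hEp0]
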